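/- Let β be a real d×d matrix, α a positive semidefinite real symmetric d×d matrix, and p ≥ 0. For a positive semidefinite real symmetric d×d matrix u, define φ(t,u) = p·log det(I + u σ_t^β(α)) and ψ(t,u) = e^{βᵀt} u (I + σ_t^β(α) u)^{-1} e^{βt}. Then (φ, ψ) satisfy the semiflow equations: for all s, t ≥ 0 and all positive semidefinite u, φ(t+s, u) = φ(t, u) + φ(s, ψ(t,u)) and ψ(t+s, u) = ψ(s, ψ(t,u)). -/

import Mathlib

/-!
The flow property `ω_{t+r} = ω_t ∘ ω_r` and additivity of the integral give the cocycle identity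
`σ_{t+s} = σ_t + ω_t(σ_s)`. Write `A = σ_t(α)`, `E = e^{βt}`, `S = σ_s(α)`. Then
`I + (A + E S Eᵀ) u = (I + E S Eᵀ u (I + A u)⁻¹) (I + A u)`, and Sylvester's identity
`det (I + X Y) = det (I + Y X)` turns the determinant of the first factor into `det (I + ψ(t,u) S)`;
taking logarithms gives the equation for `φ`. Inverting the same factorisation and moving `E`
across the inverse with `X (I + Y X)⁻¹ = (I + X Y)⁻¹ X` gives the equation for `ψ`. The determinants
do not vanish because `det (I + σ u) = det (I + u^{1/2} σ u^{1/2})` and `σ_r(α)` is positive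
semidefinite for `r ≥ 0`.
-/

open MeasureTheory Matrix

/-- The flow `ω_t^β(x) = e^{βt} x e^{βᵀt}` on real `d×d` matrices. -/
noncomputable def omegaFlow {d : ℕ} (β : Matrix (Fin d) (Fin d) ℝ) (t : ℝ)
    (x : Matrix (Fin d) (Fin d) ℝ) : Matrix (Fin d) (Fin d) ℝ :=
  NormedSpace.exp (t • β) * x * (NormedSpace.exp (t • β))ᵀ

/-- The twofold integral `σ_t^β(x) = 2 ∫₀ᵗ ω_s^β(x) ds`, defined entrywise. -/
noncomputable def sigmaFlow {d : ℕ} (β : Matrix (Fin d) (Fin d) ℝ) (t : ℝ)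
    (x : Matrix (Fin d) (Fin d) ℝ) : Matrix (Fin d) (Fin d) ℝ :=
  Matrix.of fun i j => 2 * ∫ s in (0 : ℝ)..t, omegaFlow β s x i j

/-- `φ(t,u) = p · log det (I + u σ_t^β(α))`. -/
noncomputable def wishartPhi {d : ℕ} (β α : Matrix (Fin d) (Fin d) ℝ) (p t : ℝ)
    (u : Matrix (Fin d) (Fin d) ℝ) : ℝ :=
  p * Real.log (1 + u * sigmaFlow β t α).det

/-- `ψ(t,u) = e^{βᵀt} u (I + σ_t^β(α) u)⁻¹ e^{βt}`. -/
noncomputable def wishartPsi {d : ℕ} (β α : Matrix (Fin d) (Fin d) ℝ) (t : ℝ)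
    (u : Matrix (Fin d) (Fin d) ℝ) : Matrix (Fin d) (Fin d) ℝ :=
  NormedSpace.exp (t • βᵀ) * u * (1 + sigmaFlow β t α * u)⁻¹ * NormedSpace.exp (t • β)

namespace Matrix

section OneAddMul

variable {n R : Type*} [Fintype n] [DecidableEq n] [CommRing R]

/-- Holds without invertibility hypotheses: `det (1 + X * Y) = det (1 + Y * X)`, so either both
inverses are genuine or both are the junk value `0`. -/
theorem mul_inv_one_add_mul_comm (X Y : Matrix n n R) :
    X * (1 + Y * X)⁻¹ = (1 + X * Y)⁻¹ * X := by
  by_cases h : IsUnit (1 + X * Y).det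
  · have h' : IsUnit (1 + Y * X).det := det_one_add_mul_comm X Y ▸ h
    calc X * (1 + Y * X)⁻¹ = (1 + X * Y)⁻¹ * ((1 + X * Y) * X) * (1 + Y * X)⁻¹ := by
          rw [← Matrix.mul_assoc, nonsing_inv_mul _ h, Matrix.one_mul]
      _ = (1 + X * Y)⁻¹ * X * ((1 + Y * X) * (1 + Y * X)⁻¹) := by noncomm_ring
      _ = (1 + X * Y)⁻¹ * X := by rw [mul_nonsing_inv _ h', Matrix.mul_one]
  · have h' : ¬IsUnit (1 + Y * X).det := det_one_add_mul_comm X Y ▸ h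
    rw [nonsing_inv_apply_not_isUnit _ h, nonsing_inv_apply_not_isUnit _ h', Matrix.mul_zero,
      Matrix.zero_mul]

variable {A u : Matrix n n R}

theorem one_add_add_mul_eq_mul (hA : IsUnit (1 + A * u).det) (B : Matrix n n R) :
    1 + (A + B) * u = (1 + B * u * (1 + A * u)⁻¹) * (1 + A * u) := by
  rw [Matrix.add_mul 1, Matrix.one_mul, Matrix.mul_assoc (B * u), nonsing_inv_mul _ hA,
    Matrix.mul_one, Matrix.add_mul]
  abel

theorem det_one_add_add_mul_mul_mul (hA : IsUnit (1 + A * u).det) (E S G : Matrix n n R) :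
    (1 + (A + E * S * G) * u).det =
      (1 + A * u).det * (1 + G * u * (1 + A * u)⁻¹ * E * S).det := by
  have hassoc : E * S * G * u * (1 + A * u)⁻¹ = (E * S) * (G * u * (1 + A * u)⁻¹) := by
    simp only [Matrix.mul_assoc]
  rw [one_add_add_mul_eq_mul hA, det_mul, mul_comm, hassoc, det_one_add_mul_comm (E * S)]
  simp only [Matrix.mul_assoc]

theorem mul_inv_one_add_add_mul_mul_mul (hA : IsUnit (1 + A * u).det) (E S G : Matrix n n R) :
    G * u * (1 + (A + E * S * G) * u)⁻¹ * E =
      G * u * (1 + A * u)⁻¹ * E * (1 + S * (G * u * (1 + A * u)⁻¹ * E))⁻¹ := by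
  have hpush := mul_inv_one_add_mul_comm E (S * (G * u * (1 + A * u)⁻¹))
  rw [one_add_add_mul_eq_mul hA, mul_inv_rev]
  simp only [Matrix.mul_assoc] at hpush ⊢
  rw [hpush]

end OneAddMul

open scoped ComplexOrder MatrixOrder in
theorem PosSemidef.isUnit_det_one_add_mul {n 𝕜 : Type*} [Fintype n] [DecidableEq n]
    [RCLike 𝕜] {M u : Matrix n n 𝕜} (hM : M.PosSemidef) (hu : u.PosSemidef) :
    IsUnit (1 + M * u).det := by
  set r := CFC.sqrt u
  have hr : r * r = u := CFC.sqrt_mul_sqrt_self u hu.nonneg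
  have hrH : rᴴ = r := (CFC.sqrt_nonneg u).posSemidef.1
  have hpd : (1 + rᴴ * M * r).PosDef := PosDef.one.add_posSemidef (hM.conjTranspose_mul_mul_same r)
  rw [← hr, ← Matrix.mul_assoc, det_one_add_mul_comm, hrH, ← Matrix.mul_assoc] at *
  exact (isUnit_iff_isUnit_det _).mp hpd.isUnit

section Exp

variable {m : Type*} [Fintype m] [DecidableEq m] (A : Matrix m m ℝ)

/-- Matrices carry no global norm; any submultiplicative one, here the `ℓ∞` operator norm,
induces the product topology. -/
theorem continuous_exp_smul : Continuous fun s : ℝ => NormedSpace.exp (s • A) := by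
  let _ := Matrix.linftyOpNormedRing (n := m) (α := ℝ)
  let _ := Matrix.linftyOpNormedAlgebra (R := ℝ) (n := m) (α := ℝ)
  let _ := Matrix.linftyOpNormedAlgebra (R := ℚ) (n := m) (α := ℝ)
  exact NormedSpace.exp_continuous.comp (continuous_id.smul continuous_const)

theorem exp_smul_transpose (t : ℝ) :
    NormedSpace.exp (t • Aᵀ) = (NormedSpace.exp (t • A))ᵀ := by
  rw [← transpose_smul, exp_transpose]

theorem exp_add_smul (t s : ℝ) :
    NormedSpace.exp ((t + s) • A) = NormedSpace.exp (t • A) * NormedSpace.exp (s • A) := by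
  rw [add_smul]
  exact exp_add_of_commute _ _ (((Commute.refl A).smul_left t).smul_right s)

end Exp

theorem intervalIntegral_comp_of_isLinearMap {m n : Type*} [Fintype m] [Fintype n]
    {L : Matrix m n ℝ → ℝ} (hL : IsLinearMap ℝ L) {f : ℝ → Matrix m n ℝ} (hf : Continuous f)
    (a b : ℝ) : ∫ s in a..b, L (f s) = L (of fun i j => ∫ s in a..b, f s i j) := by
  classical
  obtain ⟨c, hc⟩ : ∃ c : m → n → ℝ, ∀ M, L M = ∑ i, ∑ j, M i j * c i j := by
    refine ⟨fun i j => L (single i j 1), fun M => ?_⟩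
    change IsLinearMap.mk' L hL M = _
    conv_lhs => rw [matrix_eq_sum_single M]
    simp only [map_sum]
    refine Finset.sum_congr rfl fun i _ => Finset.sum_congr rfl fun j _ => ?_
    rw [show single i j (M i j) = M i j • single i j 1 by rw [smul_single, smul_eq_mul, mul_one],
      map_smul, smul_eq_mul]
    rfl
  have hcont : ∀ i j, Continuous fun s => f s i j * c i j :=
    fun i j => (hf.matrix_elem i j).mul continuous_const
  simp only [hc, of_apply]
  rw [intervalIntegral.integral_finsetSum fun i _ =>
    (continuous_finsetSum _ fun j _ => hcont i j).intervalIntegrable a b]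
  refine Finset.sum_congr rfl fun i _ => ?_
  rw [intervalIntegral.integral_finsetSum fun j _ => (hcont i j).intervalIntegrable a b]
  simp only [intervalIntegral.integral_mul_const]

end Matrix

section Flows

variable {d : ℕ} (β : Matrix (Fin d) (Fin d) ℝ)

theorem continuous_omegaFlow (x : Matrix (Fin d) (Fin d) ℝ) :
    Continuous fun s => omegaFlow β s x :=
  ((continuous_exp_smul β).matrix_mul continuous_const).matrix_mul
    (continuous_exp_smul β).matrix_transpose

theorem omegaFlow_add (t r : ℝ) (x : Matrix (Fin d) (Fin d) ℝ) :
    omegaFlow β (t + r) x = omegaFlow β t (omegaFlow β r x) := by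
  simp only [omegaFlow, exp_add_smul, transpose_mul, Matrix.mul_assoc]

theorem omegaFlow_smul (t c : ℝ) (x : Matrix (Fin d) (Fin d) ℝ) :
    omegaFlow β t (c • x) = c • omegaFlow β t x := by
  simp only [omegaFlow, Matrix.mul_smul, Matrix.smul_mul]

theorem posSemidef_omegaFlow {x : Matrix (Fin d) (Fin d) ℝ} (hx : x.PosSemidef) (t : ℝ) :
    (omegaFlow β t x).PosSemidef := by
  rw [omegaFlow, ← conjTranspose_eq_transpose_of_trivial (NormedSpace.exp (t • β))]
  exact hx.mul_mul_conjTranspose_same _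

theorem sigmaFlow_eq_smul (t : ℝ) (x : Matrix (Fin d) (Fin d) ℝ) :
    sigmaFlow β t x = (2 : ℝ) • of fun i j => ∫ s in (0 : ℝ)..t, omegaFlow β s x i j := by
  ext i j
  simp [sigmaFlow]

theorem omegaFlow_sigmaFlow (t s : ℝ) (x : Matrix (Fin d) (Fin d) ℝ) :
    omegaFlow β t (sigmaFlow β s x) =
      of fun i j => 2 * ∫ r in (0 : ℝ)..s, omegaFlow β (t + r) x i j := by
  ext i j
  have hL := intervalIntegral_comp_of_isLinearMap (L := fun M => omegaFlow β t M i j)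
    ⟨fun M N => by simp [omegaFlow, Matrix.mul_add, Matrix.add_mul],
      fun c M => by simp [omegaFlow_smul]⟩
    (continuous_omegaFlow β x) 0 s
  simp only [← omegaFlow_add] at hL
  rw [sigmaFlow_eq_smul, omegaFlow_smul, Matrix.smul_apply, ← hL, of_apply, smul_eq_mul]

theorem sigmaFlow_add (t s : ℝ) (x : Matrix (Fin d) (Fin d) ℝ) :
    sigmaFlow β (t + s) x = sigmaFlow β t x + omegaFlow β t (sigmaFlow β s x) := by
  have hint : ∀ i j (a b : ℝ), IntervalIntegrable (fun r => omegaFlow β r x i j) volume a b :=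
    fun i j a b => ((continuous_omegaFlow β x).matrix_elem i j).intervalIntegrable a b
  ext i j
  rw [omegaFlow_sigmaFlow, Matrix.add_apply, of_apply, sigmaFlow, sigmaFlow, of_apply, of_apply,
    ← intervalIntegral.integral_add_adjacent_intervals (hint i j 0 t) (hint i j t (t + s)),
    intervalIntegral.integral_comp_add_left (fun r => omegaFlow β r x i j), add_zero, mul_add]

theorem posSemidef_sigmaFlow {x : Matrix (Fin d) (Fin d) ℝ} (hx : x.PosSemidef) {t : ℝ}
    (ht : 0 ≤ t) : (sigmaFlow β t x).PosSemidef := by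
  refine .of_dotProduct_mulVec_nonneg ?_ fun v => ?_
  · ext i j
    simp only [conjTranspose_apply, star_trivial, sigmaFlow, of_apply]
    congr 1
    refine intervalIntegral.integral_congr fun r _ => ?_
    simpa using (posSemidef_omegaFlow β hx r).1.apply i j
  · have hL := intervalIntegral_comp_of_isLinearMap (L := fun M => star v ⬝ᵥ M *ᵥ v)
      ⟨fun M N => by simp [add_mulVec, dotProduct_add],
        fun c M => by simp [smul_mulVec, dotProduct_smul]⟩
      (continuous_omegaFlow β x) 0 t
    rw [sigmaFlow_eq_smul, smul_mulVec, dotProduct_smul, ← hL, smul_eq_mul]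
    exact mul_nonneg zero_le_two (intervalIntegral.integral_nonneg ht fun r _ =>
      (posSemidef_omegaFlow β hx r).dotProduct_mulVec_nonneg v)

end Flows

theorem wishart_semiflow_equations_general {d : ℕ} (β : Matrix (Fin d) (Fin d) ℝ)
    (α : Matrix (Fin d) (Fin d) ℝ) (hα : α.PosSemidef) (p : ℝ)
    (s t : ℝ) (hs : 0 ≤ s) (ht : 0 ≤ t)
    (u : Matrix (Fin d) (Fin d) ℝ) (hu : u.PosSemidef) :
    wishartPhi β α p (t + s) u = wishartPhi β α p t u + wishartPhi β α p s (wishartPsi β α t u) ∧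
      wishartPsi β α (t + s) u = wishartPsi β α s (wishartPsi β α t u) := by
  have hψ : ∀ r v, wishartPsi β α r v =
      (NormedSpace.exp (r • β))ᵀ * v * (1 + sigmaFlow β r α * v)⁻¹ * NormedSpace.exp (r • β) :=
    fun r v => by rw [wishartPsi, exp_smul_transpose]
  have hσ := sigmaFlow_add β t s α
  have hA := (posSemidef_sigmaFlow β hα ht).isUnit_det_one_add_mul hu
  have hdet : (1 + sigmaFlow β (t + s) α * u).det =
      (1 + sigmaFlow β t α * u).det * (1 + wishartPsi β α t u * sigmaFlow β s α).det := by
    rw [hσ, omegaFlow, det_one_add_add_mul_mul_mul hA, hψ]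
  have hdet_ne := hdet ▸
    ((posSemidef_sigmaFlow β hα (add_nonneg ht hs)).isUnit_det_one_add_mul hu).ne_zero
  constructor
  · simp only [wishartPhi, det_one_add_mul_comm u, hdet]
    rw [Real.log_mul (left_ne_zero_of_mul hdet_ne) (right_ne_zero_of_mul hdet_ne), mul_add]
  · rw [hψ, hψ s, hψ t, hσ, omegaFlow, exp_add_smul, transpose_mul]
    generalize NormedSpace.exp (t • β) = E
    generalize NormedSpace.exp (s • β) = F
    generalize sigmaFlow β t α = A at hA ⊢
    calc Fᵀ * Eᵀ * u * (1 + (A + E * sigmaFlow β s α * Eᵀ) * u)⁻¹ * (E * F)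
        = Fᵀ * (Eᵀ * u * (1 + (A + E * sigmaFlow β s α * Eᵀ) * u)⁻¹ * E) * F := by
          simp only [Matrix.mul_assoc]
      _ = _ := by rw [mul_inv_one_add_add_mul_mul_mul hA, ← Matrix.mul_assoc Fᵀ]

/-- The functions `(φ, ψ)` satisfy the semiflow equations
`φ(t+s, u) = φ(t, u) + φ(s, ψ(t,u))` and `ψ(t+s, u) = ψ(s, ψ(t,u))`
for all `s, t ≥ 0` and all positive semidefinite `u`. -/
theorem wishart_semiflow_equations {d : ℕ} (β : Matrix (Fin d) (Fin d) ℝ)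
    (α : Matrix (Fin d) (Fin d) ℝ) (hα : α.PosSemidef) (p : ℝ) (hp : 0 ≤ p)
    (s t : ℝ) (hs : 0 ≤ s) (ht : 0 ≤ t)
    (u : Matrix (Fin d) (Fin d) ℝ) (hu : u.PosSemidef) :
    wishartPhi β α p (t + s) u = wishartPhi β α p t u + wishartPhi β α p s (wishartPsi β α t u) ∧
      wishartPsi β α (t + s) u = wishartPsi β α s (wishartPsi β α t u) :=
  wishart_semiflow_equations_general β α hα p s t hs ht u hu
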